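/- If ‖x‖₂ = ‖x'‖₂ = 1, then the variance of the hashed inner product is at most 2/m, i.e., Var(⟨x,x'⟩_φ) ≤ 2/m. -/

import Mathlib

open Finset

/-- Sign associated to a boolean. -/
noncomputable def sgn (b : Bool) : ℝ := if b then 1 else -1

/-- Hashed inner product for fixed hash `h` and sign `ξ`. -/
noncomputable def hip {d m : ℕ} (h : Fin d → Fin m) (ξ : Fin d → Bool)
    (x x' : Fin d → ℝ) : ℝ :=
  ∑ k : Fin m,
    (∑ j ∈ Finset.univ.filter (fun j => h j = k), sgn (ξ j) * x j) *
    (∑ j ∈ Finset.univ.filter (fun j => h j = k), sgn (ξ j) * x' j)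

/-- Expectation over the uniformly random pair `(h, ξ)`. -/
noncomputable def hashExp (d m : ℕ) (f : (Fin d → Fin m) → (Fin d → Bool) → ℝ) : ℝ :=
  (∑ h : Fin d → Fin m, ∑ ξ : Fin d → Bool, f h ξ) / ((m : ℝ) ^ d * 2 ^ d)

/-!
Writing `εᵢ = sgn (ξ i)`, for a fixed hash `h` the hashed inner product is
`⟨x, x'⟩ + ∑_{i ≠ j} cᵢⱼ εᵢ εⱼ` with `cᵢⱼ = [h i = h j] xᵢ x'ⱼ`. Since
`E[εᵢ εⱼ εₖ εₗ] = [{i, j} = {k, l}]` when `i ≠ j` and `k ≠ l`, this chaos has mean `0` and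
second moment `∑_{i ≠ j} cᵢⱼ (cᵢⱼ + cⱼᵢ)`. Averaging over `h`, a collision `h i = h j` with
`i ≠ j` has probability `1 / m`, so the variance is
`(1 / m) ∑_{i ≠ j} (xᵢ² x'ⱼ² + xᵢ x'ᵢ xⱼ x'ⱼ)`, and by Cauchy–Schwarz both
parts of the sum are at most `‖x‖² ‖x'‖² = 1`.
-/

section

variable {ι : Type*} [Fintype ι] [DecidableEq ι]

lemma sum_prod_eq_sum_diag_add_sum_offDiag {M : Type*} [AddCommMonoid M] (f : ι × ι → M) :
    ∑ p, f p = ∑ i, f (i, i) + ∑ p ∈ univ.offDiag, f p := by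
  rw [← univ_product_univ, ← diag_union_offDiag, sum_union (disjoint_diag_offDiag _),
    diag_eq_filter, sum_filter, univ_product_univ, Fintype.sum_prod_type]
  simp

lemma sum_offDiag_le_two_mul_sum_sq_mul_sum_sq (x x' : ι → ℝ) :
    ∑ p ∈ univ.offDiag, x p.1 * x' p.2 * (x p.1 * x' p.2 + x p.2 * x' p.1) ≤
      2 * ((∑ i, x i ^ 2) * ∑ i, x' i ^ 2) := by
  have hsplit := sum_prod_eq_sum_diag_add_sum_offDiag
    fun p : ι × ι => x p.1 * x' p.2 * (x p.1 * x' p.2 + x p.2 * x' p.1)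
  have hall : ∑ p : ι × ι, x p.1 * x' p.2 * (x p.1 * x' p.2 + x p.2 * x' p.1) =
      (∑ i, x i ^ 2) * (∑ i, x' i ^ 2) + (∑ i, x i * x' i) ^ 2 := by
    simp_rw [Fintype.sum_prod_type, sq, sum_mul_sum, ← sum_add_distrib]
    exact sum_congr rfl fun i _ => sum_congr rfl fun j _ => by ring
  have hdiag : 0 ≤ ∑ i, x i * x' i * (x i * x' i + x i * x' i) :=
    sum_nonneg fun i _ => by nlinarith [sq_nonneg (x i * x' i)]
  have hcs := sum_mul_sq_le_sq_mul_sq univ x x'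
  linarith

lemma sgn_mul_self (b : Bool) : sgn b * sgn b = 1 := by cases b <;> simp [sgn]

lemma sgn_not (b : Bool) : sgn (!b) = -sgn b := by cases b <;> simp [sgn]

lemma sum_sgn_mul_eq_zero (i : ι) (F : (ι → Bool) → ℝ)
    (hF : ∀ ξ, F (Function.update ξ i (!ξ i)) = F ξ) :
    ∑ ξ : ι → Bool, sgn (ξ i) * F ξ = 0 := by
  have hflip : Function.Involutive fun ξ : ι → Bool => Function.update ξ i (!ξ i) := by
    intro ξ; simp
  have h := Equiv.sum_comp (hflip.toPerm _) fun ξ => sgn (ξ i) * F ξ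
  simp only [Function.Involutive.coe_toPerm, Function.update_self, sgn_not, hF, neg_mul,
    sum_neg_distrib] at h
  linarith

lemma sum_sgn_mul_sgn (i j : ι) :
    ∑ ξ : ι → Bool, sgn (ξ i) * sgn (ξ j) = if i = j then 2 ^ Fintype.card ι else 0 := by
  split_ifs with hij
  · simp [hij, sgn_mul_self]
  · exact sum_sgn_mul_eq_zero i _ fun ξ => by rw [Function.update_of_ne (Ne.symm hij)]

lemma sum_sgn_mul_sgn_mul_sgn_mul_sgn {p q : ι × ι} (hp : p.1 ≠ p.2) (hq : q.1 ≠ q.2) :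
    ∑ ξ : ι → Bool, sgn (ξ p.1) * sgn (ξ p.2) * (sgn (ξ q.1) * sgn (ξ q.2)) =
      2 ^ Fintype.card ι * ((if p = q then 1 else 0) + (if p.swap = q then 1 else 0)) := by
  obtain ⟨i, j⟩ := p
  obtain ⟨k, l⟩ := q
  dsimp only at hp hq ⊢
  by_cases hik : i = k
  · subst hik
    have h (ξ : ι → Bool) : sgn (ξ i) * sgn (ξ j) * (sgn (ξ i) * sgn (ξ l)) =
        sgn (ξ j) * sgn (ξ l) := by
      linear_combination sgn (ξ j) * sgn (ξ l) * sgn_mul_self (ξ i)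
    simp_rw [h, sum_sgn_mul_sgn]
    simp [hp.symm]
  by_cases hil : i = l
  · subst hil
    have h (ξ : ι → Bool) : sgn (ξ i) * sgn (ξ j) * (sgn (ξ k) * sgn (ξ i)) =
        sgn (ξ j) * sgn (ξ k) := by
      linear_combination sgn (ξ j) * sgn (ξ k) * sgn_mul_self (ξ i)
    simp_rw [h, sum_sgn_mul_sgn]
    simp [hik]
  · simp_rw [mul_assoc]
    rw [sum_sgn_mul_eq_zero i (fun ξ => sgn (ξ j) * (sgn (ξ k) * sgn (ξ l))) fun ξ => by
      simp only [Function.update_of_ne (Ne.symm hp), Function.update_of_ne (Ne.symm hik),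
        Function.update_of_ne (Ne.symm hil)]]
    simp [hik, hil]

noncomputable def rademacherChaos (c : ι × ι → ℝ) (ξ : ι → Bool) : ℝ :=
  ∑ p ∈ univ.offDiag, c p * (sgn (ξ p.1) * sgn (ξ p.2))

lemma sum_rademacherChaos (c : ι × ι → ℝ) : ∑ ξ : ι → Bool, rademacherChaos c ξ = 0 := by
  simp_rw [rademacherChaos]
  rw [sum_comm]
  refine sum_eq_zero fun p hp => ?_
  rw [← mul_sum, sum_sgn_mul_sgn, if_neg (mem_offDiag.1 hp).2.2, mul_zero]

lemma sum_rademacherChaos_sq (c : ι × ι → ℝ) :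
    ∑ ξ : ι → Bool, rademacherChaos c ξ ^ 2 =
      2 ^ Fintype.card ι * ∑ p ∈ univ.offDiag, c p * (c p + c p.swap) := by
  have hswap {p : ι × ι} (hp : p ∈ univ.offDiag) : p.swap ∈ univ.offDiag := by
    simpa [eq_comm] using hp
  calc ∑ ξ : ι → Bool, rademacherChaos c ξ ^ 2
      = ∑ p ∈ univ.offDiag, ∑ q ∈ univ.offDiag, c p * c q *
          ∑ ξ : ι → Bool, sgn (ξ p.1) * sgn (ξ p.2) * (sgn (ξ q.1) * sgn (ξ q.2)) := by
        simp_rw [rademacherChaos, sq, sum_mul_sum, mul_sum]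
        rw [sum_comm]
        refine sum_congr rfl fun p _ => ?_
        rw [sum_comm]
        exact sum_congr rfl fun q _ => sum_congr rfl fun ξ _ => by ring
    _ = ∑ p ∈ univ.offDiag, 2 ^ Fintype.card ι * ∑ q ∈ univ.offDiag,
          ((if p = q then c p * c q else 0) + (if p.swap = q then c p * c q else 0)) := by
        refine sum_congr rfl fun p hp => ?_
        rw [mul_sum]
        refine sum_congr rfl fun q hq => ?_
        rw [sum_sgn_mul_sgn_mul_sgn_mul_sgn (mem_offDiag.1 hp).2.2 (mem_offDiag.1 hq).2.2]
        split_ifs <;> ring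
    _ = 2 ^ Fintype.card ι * ∑ p ∈ univ.offDiag, c p * (c p + c p.swap) := by
        rw [← mul_sum]
        refine congrArg _ (sum_congr rfl fun p hp => ?_)
        rw [sum_add_distrib, sum_ite_eq, sum_ite_eq, if_pos hp, if_pos (hswap hp), mul_add]

end

lemma card_filter_apply_eq_apply_mul_card {ι β : Type*} [Fintype ι] [DecidableEq ι]
    [Fintype β] [DecidableEq β] {i j : ι} (hij : i ≠ j) :
    #{h : ι → β | h i = h j} * Fintype.card β = Fintype.card β ^ Fintype.card ι := by
  let e : {h : ι → β // h i = h j} ≃ ({t // t ≠ i} → β) :=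
    { toFun := fun h t => h.1 t
      invFun := fun g => ⟨fun t => if ht : t = i then g ⟨j, hij.symm⟩ else g ⟨t, ht⟩,
        by simp [hij.symm]⟩
      left_inv := fun h => by
        ext t
        by_cases ht : t = i
        · subst ht; simp [h.2]
        · simp [ht]
      right_inv := fun g => by
        ext ⟨t, ht⟩
        simp [ht] }
  have hι : 0 < Fintype.card ι := Fintype.card_pos_iff.2 ⟨i⟩
  rw [← Fintype.card_subtype, Fintype.card_congr e, Fintype.card_fun, Fintype.card_subtype_compl,
    Fintype.card_subtype_eq, ← pow_succ, Nat.sub_add_cancel hι]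

lemma hashExp_sq_sub_sq {d m : ℕ} (hm : 0 < m) (f : (Fin d → Fin m) → (Fin d → Bool) → ℝ) :
    hashExp d m (fun h ξ => f h ξ ^ 2) - hashExp d m f ^ 2 =
      hashExp d m (fun h ξ => (f h ξ - hashExp d m f) ^ 2) := by
  have hN : (m : ℝ) ^ d * 2 ^ d ≠ 0 := by positivity
  set μ := hashExp d m f with hμ
  rw [hashExp, eq_div_iff hN] at hμ
  simp only [hashExp, sub_sq, sum_add_distrib, sum_sub_distrib, ← sum_mul, ← mul_sum,
    sum_const, card_univ, Fintype.card_fun, Fintype.card_fin, Fintype.card_bool, nsmul_eq_mul]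
  field_simp
  push_cast
  linear_combination (-2 * μ) * hμ

lemma hip_eq_add_rademacherChaos {d m : ℕ} (h : Fin d → Fin m) (ξ : Fin d → Bool)
    (x x' : Fin d → ℝ) :
    hip h ξ x x' = ∑ i, x i * x' i +
      rademacherChaos (fun p => if h p.1 = h p.2 then x p.1 * x' p.2 else 0) ξ := by
  have hpair : hip h ξ x x' = ∑ p : Fin d × Fin d,
      if h p.1 = h p.2 then x p.1 * x' p.2 * (sgn (ξ p.1) * sgn (ξ p.2)) else 0 := by
    simp_rw [hip, sum_filter, sum_mul_sum, Fintype.sum_prod_type]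
    rw [sum_comm]
    refine sum_congr rfl fun i _ => ?_
    rw [sum_comm]
    refine sum_congr rfl fun j _ => ?_
    simp only [ite_mul, mul_ite, zero_mul, mul_zero, sum_ite_eq, mem_univ, if_true]
    split_ifs <;> ring
  rw [hpair, sum_prod_eq_sum_diag_add_sum_offDiag]
  simp [rademacherChaos, sgn_mul_self, ite_mul]

lemma hashExp_hip {d m : ℕ} (hm : 0 < m) (x x' : Fin d → ℝ) :
    hashExp d m (fun h ξ => hip h ξ x x') = ∑ i, x i * x' i := by
  simp only [hashExp, hip_eq_add_rademacherChaos, sum_add_distrib, sum_rademacherChaos,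
    add_zero, sum_const, card_univ, Fintype.card_fun, Fintype.card_fin, Fintype.card_bool,
    nsmul_eq_mul]
  field_simp
  push_cast
  ring

lemma hashExp_hip_sub_sq {d m : ℕ} (hm : 0 < m) (x x' : Fin d → ℝ) :
    hashExp d m (fun h ξ => (hip h ξ x x' - ∑ i, x i * x' i) ^ 2) =
      (∑ p ∈ univ.offDiag, x p.1 * x' p.2 * (x p.1 * x' p.2 + x p.2 * x' p.1)) / m := by
  have hcollide {p : Fin d × Fin d} (hp : p ∈ univ.offDiag) :
      ∑ h : Fin d → Fin m, (if h p.1 = h p.2 then x p.1 * x' p.2 else 0) *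
        ((if h p.1 = h p.2 then x p.1 * x' p.2 else 0) +
          (if h p.2 = h p.1 then x p.2 * x' p.1 else 0)) =
      (m : ℝ) ^ d / m * (x p.1 * x' p.2 * (x p.1 * x' p.2 + x p.2 * x' p.1)) := by
    have hcard := card_filter_apply_eq_apply_mul_card (β := Fin m) (mem_offDiag.1 hp).2.2
    simp only [Fintype.card_fin] at hcard
    have hsummand (h : Fin d → Fin m) :
        (if h p.1 = h p.2 then x p.1 * x' p.2 else 0) *
          ((if h p.1 = h p.2 then x p.1 * x' p.2 else 0) +
            (if h p.2 = h p.1 then x p.2 * x' p.1 else 0)) =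
        if h p.1 = h p.2 then x p.1 * x' p.2 * (x p.1 * x' p.2 + x p.2 * x' p.1) else 0 := by
      by_cases hc : h p.1 = h p.2
      · simp [hc]
      · simp [hc, Ne.symm hc]
    rw [sum_congr rfl fun h _ => hsummand h, ← sum_filter, sum_const, nsmul_eq_mul]
    congr 1
    rw [eq_div_iff (by positivity)]
    exact_mod_cast hcard
  simp_rw [hashExp, hip_eq_add_rademacherChaos, add_sub_cancel_left, sum_rademacherChaos_sq,
    Fintype.card_fin, Prod.fst_swap, Prod.snd_swap, ← mul_sum]
  rw [sum_comm, sum_congr rfl fun p hp => hcollide hp, ← mul_sum]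
  field_simp

/-- For unit vectors, the variance of the hashed inner product is at most `2/m`. -/
theorem hash_kernel_variance_le (d m : ℕ) (hm : 0 < m) (x x' : Fin d → ℝ)
    (hx : ∑ i : Fin d, x i ^ 2 = 1) (hx' : ∑ i : Fin d, x' i ^ 2 = 1) :
    hashExp d m (fun h ξ => (hip h ξ x x') ^ 2) -
        (hashExp d m (fun h ξ => hip h ξ x x')) ^ 2 ≤ 2 / (m : ℝ) := by
  rw [hashExp_sq_sub_sq hm, hashExp_hip hm, hashExp_hip_sub_sq hm]
  gcongr
  simpa [hx, hx'] using sum_offDiag_le_two_mul_sum_sq_mul_sum_sq x x'
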